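/- arXiv:1509.00231 — 2 statements merged into one kernel-verified Lean document; each statement's English description precedes it below -/
import Mathlib

section
/- Let t ≥ 0 and let W be a real-valued F_{t+1}-measurable random variable such that E[W | F_t] = 0 a.s. Then there exists an ℝ^N-valued F_t-measurable random variable Z_t such that W = Z_tᵀM_{t+1} a.s., and this Z_t is unique up to the equivalence ∼_{M_{t+1}}. -/
/-! Every `F (t+1)`-measurable `W` is a.e. a function `G` of the path `(X 0, …, X (t+1))`, which
takes finitely many values. Continuing the path up to `t` by the state `e i` gives the
`F t`-measurable coefficients `Z ω i = G (path_t ω, i)`, so that `W = Zᵀ X_{t+1}` a.e. Taking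
`E[· | F t]` and pulling out the bounded `Z` yields `0 = Zᵀ E[X_{t+1} | F t]`, hence
`W = Zᵀ M_{t+1}`. Uniqueness is immediate: two representations give `(Z - Z')ᵀ M_{t+1} = 0` a.e. -/

open MeasureTheory Finset Filter

noncomputable section

namespace DiscreteEBSDE

variable {Ω : Type*} {mΩ : MeasurableSpace Ω} {N : ℕ}

/-- The standard basis vector `e i` of `ℝ^N`. -/
def e (N : ℕ) (i : Fin N) : Fin N → ℝ := Pi.single i 1

/-- The Euclidean inner product on `ℝ^N`. -/
def dotR {N : ℕ} (z w : Fin N → ℝ) : ℝ := ∑ i, z i * w i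

/-- The process `X` takes values in the standard basis of `ℝ^N`. -/
def BasisValued (X : ℕ → Ω → (Fin N → ℝ)) : Prop := ∀ t ω, ∃ i, X t ω = e N i

/-- The σ-algebra generated by `X 0, …, X t`. -/
def natSigma (X : ℕ → Ω → (Fin N → ℝ)) (t : ℕ) : MeasurableSpace Ω :=
  ⨆ s ∈ Set.Iic t, MeasurableSpace.comap (X s) inferInstance

/-- `F` is the `P`-completion of the natural filtration of `X`:
a set is `F t`-measurable iff it agrees with a set of the natural σ-algebra up to a
`P`-null symmetric difference. -/
def IsCompletedNaturalFiltration (P : Measure Ω) (X : ℕ → Ω → (Fin N → ℝ))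
    (F : Filtration ℕ mΩ) : Prop :=
  ∀ (t : ℕ) (A : Set Ω), MeasurableSet[F t] A ↔
    ∃ B : Set Ω, MeasurableSet[natSigma X t] B ∧ P (symmDiff A B) = 0

/-- The martingale difference `M (t+1) = X (t+1) - E[X (t+1) | F t]` (componentwise). -/
def Mdiff (P : Measure Ω) (F : Filtration ℕ mΩ) (X : ℕ → Ω → (Fin N → ℝ)) (t : ℕ)
    (ω : Ω) : Fin N → ℝ :=
  fun i => X (t + 1) ω i - (P[(fun ω' => X (t + 1) ω' i)|F t]) ω

/-- The conditional second moment `‖Z‖²_{M_{t+1}} = E[(Zᵀ M_{t+1})² | F t]`. -/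
def seminormSq (P : Measure Ω) (F : Filtration ℕ mΩ) (X : ℕ → Ω → (Fin N → ℝ))
    (t : ℕ) (Z : Ω → Fin N → ℝ) : Ω → ℝ :=
  P[(fun ω => (dotR (Z ω) (Mdiff P F X t ω)) ^ 2)|F t]

/-- The stochastic seminorm `‖Z‖_{M_{t+1}}`. -/
def mSeminorm (P : Measure Ω) (F : Filtration ℕ mΩ) (X : ℕ → Ω → (Fin N → ℝ))
    (t : ℕ) (Z : Ω → Fin N → ℝ) (ω : Ω) : ℝ :=
  Real.sqrt (seminormSq P F X t Z ω)

/-- `Z ∼_{M_{t+1}} Z'`, i.e. `‖Z - Z'‖_{M_{t+1}} = 0` a.s. -/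
def equivMt (P : Measure Ω) (F : Filtration ℕ mΩ) (X : ℕ → Ω → (Fin N → ℝ)) (t : ℕ)
    (Z Z' : Ω → Fin N → ℝ) : Prop :=
  seminormSq P F X t (fun ω => Z ω - Z' ω) =ᵐ[P] 0

/-- `Z ∼_M Z'`. -/
def equivM (P : Measure Ω) (F : Filtration ℕ mΩ) (X : ℕ → Ω → (Fin N → ℝ))
    (Z Z' : ℕ → Ω → Fin N → ℝ) : Prop :=
  ∀ t, equivMt P F X t (Z t) (Z' t)

/-- A driver `f(ω,t,y,z)` is adapted if `(ω,y,z) ↦ f(ω,t,y,z)` is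
`F t ⊗ B(ℝ) ⊗ B(ℝ^N)`-measurable for every `t`. -/
def DriverAdapted (F : Filtration ℕ mΩ) (f : Ω → ℕ → ℝ → (Fin N → ℝ) → ℝ) : Prop :=
  ∀ t : ℕ, Measurable[(F t).prod inferInstance]
    fun p : Ω × (ℝ × (Fin N → ℝ)) => f p.1 t p.2.1 p.2.2

/-- A column-stochastic transition matrix. -/
def IsTransMat {n : ℕ} (A : Matrix (Fin n) (Fin n) ℝ) : Prop :=
  (∀ i j, 0 ≤ A i j) ∧ ∀ j, ∑ i, A i j = 1

/-- `X` is a Markov chain with transition matrices `A t`; since `X` is valued in the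
standard basis this is equivalent to `E[X (t+1) | F t] = (A t) (X t)` a.s. -/
def IsMarkovChain (P : Measure Ω) (F : Filtration ℕ mΩ) (X : ℕ → Ω → (Fin N → ℝ))
    (A : ℕ → Matrix (Fin N) (Fin N) ℝ) : Prop :=
  (∀ t, IsTransMat (A t)) ∧
    ∀ (t : ℕ) (i : Fin N),
      (P[(fun ω => X (t + 1) ω i)|F t]) =ᵐ[P] fun ω => (A t).mulVec (X t ω) i

/-- The atom of `F t` containing `ω₀` (the set of paths agreeing with `ω₀` up to time `t`). -/
def pathAtom (X : ℕ → Ω → (Fin N → ℝ)) (t : ℕ) (ω₀ : Ω) : Set Ω :=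
  {ω' | ∀ s ≤ t, X s ω' = X s ω₀}

/-- `min_{i ∈ J_t^F} (z - z')ᵀ(e_i - E[X_{t+1} | F_t])` where `F` is the atom of `ω₀`
 at time `t` and `J_t^F = {i : P(X_{t+1} = e_i | F) > 0}`. -/
def minJump (P : Measure Ω) (F : Filtration ℕ mΩ) (X : ℕ → Ω → (Fin N → ℝ))
    (t : ℕ) (ω₀ : Ω) (z z' : Fin N → ℝ) (ω : Ω) : ℝ :=
  sInf {r : ℝ | ∃ i : Fin N,
    0 < P ({ω' | X (t + 1) ω' = e N i} ∩ pathAtom X t ω₀) ∧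
    r = dotR (z - z') (fun j => e N i j - (P[(fun ω'' => X (t + 1) ω'' j)|F t]) ω)}

/-- The comparison condition of the change-of-measure proposition: on every atom `F` of
`F t`, `f(ω,t,y,z) - f(ω,t,y,z') > min_{i ∈ J_t^F}{(z-z')ᵀ(e_i - E[X_{t+1}|F_t])}`, unless
this minimum is `0`, in which case equality holds. -/
def ComparisonCondition (P : Measure Ω) (F : Filtration ℕ mΩ) (X : ℕ → Ω → (Fin N → ℝ))
    (f : Ω → ℕ → ℝ → (Fin N → ℝ) → ℝ) : Prop :=
  ∀ (t : ℕ) (y : ℝ) (z z' : Fin N → ℝ) (ω₀ : Ω), 0 < P (pathAtom X t ω₀) →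
    ∀ᵐ ω ∂P, ω ∈ pathAtom X t ω₀ →
      (minJump P F X t ω₀ z z' ω = 0 → f ω t y z - f ω t y z' = 0) ∧
      (minJump P F X t ω₀ z z' ω ≠ 0 →
        minJump P F X t ω₀ z z' ω < f ω t y z - f ω t y z')

/-- `f` is Lipschitz in `z` with constant `L`, w.r.t. the stochastic seminorm. -/
def DriverLipschitzNoY (P : Measure Ω) (F : Filtration ℕ mΩ) (X : ℕ → Ω → (Fin N → ℝ))
    (L : ℝ) (f : Ω → ℕ → (Fin N → ℝ) → ℝ) : Prop :=
  ∀ (t : ℕ) (Zt Z't : Ω → Fin N → ℝ),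
    StronglyMeasurable[F t] Zt → StronglyMeasurable[F t] Z't →
    ∀ᵐ ω ∂P, |f ω t (Zt ω) - f ω t (Z't ω)| ≤
      L * mSeminorm P F X t (fun ω' => Zt ω' - Z't ω') ω

/-- `(Y,Z)` is an adapted solution of the finite horizon BSDE with driver `f`,
horizon `T` and terminal condition `ξ`. -/
def SolvesFiniteBSDE (P : Measure Ω) (F : Filtration ℕ mΩ) (X : ℕ → Ω → (Fin N → ℝ))
    (f : Ω → ℕ → ℝ → (Fin N → ℝ) → ℝ) (T : ℕ) (ξ : Ω → ℝ)
    (Y : ℕ → Ω → ℝ) (Z : ℕ → Ω → Fin N → ℝ) : Prop :=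
  Adapted F Y ∧ Adapted F Z ∧
    ∀ t ≤ T, ∀ᵐ ω ∂P,
      Y t ω - ∑ u ∈ Finset.Ico t T, f ω u (Y u ω) (Z u ω) +
        ∑ u ∈ Finset.Ico t T, dotR (Z u ω) (Mdiff P F X u ω) = ξ ω

/-- `(Y,Z)` is an adapted solution of the infinite-horizon discounted BSDE
with discount rate `α` and driver `f` (independent of `y`). -/
def SolvesDiscountedBSDE (P : Measure Ω) (F : Filtration ℕ mΩ) (X : ℕ → Ω → (Fin N → ℝ))
    (α : ℝ) (f : Ω → ℕ → (Fin N → ℝ) → ℝ)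
    (Y : ℕ → Ω → ℝ) (Z : ℕ → Ω → Fin N → ℝ) : Prop :=
  Adapted F Y ∧ Adapted F Z ∧
    ∀ t T : ℕ, t < T → ∀ᵐ ω ∂P,
      Y T ω = Y t ω - ∑ u ∈ Finset.Ico t T, (f ω u (Z u ω) - α * Y u ω) +
        ∑ u ∈ Finset.Ico t T, dotR (Z u ω) (Mdiff P F X u ω)

/-- `(Y,Z,lam)` solves the Ergodic BSDE with Markovian driver `f`. -/
def SolvesEBSDE (P : Measure Ω) (F : Filtration ℕ mΩ) (X : ℕ → Ω → (Fin N → ℝ))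
    (f : (Fin N → ℝ) → (Fin N → ℝ) → ℝ) (Y : ℕ → Ω → ℝ) (Z : ℕ → Ω → Fin N → ℝ)
    (lam : ℝ) : Prop :=
  ∀ t T : ℕ, t < T → ∀ᵐ ω ∂P,
    Y T ω = Y t ω - ∑ u ∈ Finset.Ico t T, (f (X u ω) (Z u ω) - lam) +
      ∑ u ∈ Finset.Ico t T, dotR (Z u ω) (Mdiff P F X u ω)

/-- Ratio with the convention `0/0 := 1`. -/
def balRatio (a b : ℝ) : ℝ := if a = 0 ∧ b = 0 then 1 else a / b

/-- The driver `f(ω,t,y,z)` is `γ`-balanced. -/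
def IsGammaBalanced (P : Measure Ω) (F : Filtration ℕ mΩ) (X : ℕ → Ω → (Fin N → ℝ))
    (A : ℕ → Matrix (Fin N) (Fin N) ℝ) (γ : ℝ)
    (f : Ω → ℕ → ℝ → (Fin N → ℝ) → ℝ) : Prop :=
  ∃ ψ : Ω → ℕ → (Fin N → ℝ) → (Fin N → ℝ) → (Fin N → ℝ),
    (∀ t : ℕ, Measurable[(F t).prod inferInstance]
      fun p : Ω × ((Fin N → ℝ) × (Fin N → ℝ)) => ψ p.1 t p.2.1 p.2.2) ∧
    ∀ (t : ℕ) (y : ℝ) (z z' : Fin N → ℝ), ∀ᵐ ω ∂P,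
      f ω t y z - f ω t y z' =
          dotR (z - z') (fun i => ψ ω t z z' i - (A t).mulVec (X t ω) i) ∧
        (∀ i, balRatio (ψ ω t z z' i) ((A t).mulVec (X t ω) i) ∈ Set.Icc γ γ⁻¹) ∧
        ∑ i, ψ ω t z z' i = 1

/-- The driver `f(ω,t,z)` (independent of `y`) is `γ`-balanced. -/
def IsGammaBalancedNoY (P : Measure Ω) (F : Filtration ℕ mΩ) (X : ℕ → Ω → (Fin N → ℝ))
    (A : ℕ → Matrix (Fin N) (Fin N) ℝ) (γ : ℝ)
    (f : Ω → ℕ → (Fin N → ℝ) → ℝ) : Prop :=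
  ∃ ψ : Ω → ℕ → (Fin N → ℝ) → (Fin N → ℝ) → (Fin N → ℝ),
    (∀ t : ℕ, Measurable[(F t).prod inferInstance]
      fun p : Ω × ((Fin N → ℝ) × (Fin N → ℝ)) => ψ p.1 t p.2.1 p.2.2) ∧
    ∀ (t : ℕ) (z z' : Fin N → ℝ), ∀ᵐ ω ∂P,
      f ω t z - f ω t z' =
          dotR (z - z') (fun i => ψ ω t z z' i - (A t).mulVec (X t ω) i) ∧
        (∀ i, balRatio (ψ ω t z z' i) ((A t).mulVec (X t ω) i) ∈ Set.Icc γ γ⁻¹) ∧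
        ∑ i, ψ ω t z z' i = 1

/-- A probability vector on `Fin n`. -/
def IsProbVec {n : ℕ} (μ : Fin n → ℝ) : Prop := (∀ i, 0 ≤ μ i) ∧ ∑ i, μ i = 1

/-- Total variation distance between (signed) measures on a finite state space. -/
def tvDist {n : ℕ} (μ ν : Fin n → ℝ) : ℝ := (∑ x, |μ x - ν x|) / 2

/-- Uniform ergodicity of the chain induced by the column-stochastic matrix `A`. -/
def UniformlyErgodic {n : ℕ} (A : Matrix (Fin n) (Fin n) ℝ) : Prop :=
  ∃ π : Fin n → ℝ, IsProbVec π ∧ ∃ R ρ : ℝ, 0 < R ∧ 0 < ρ ∧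
    ∀ (t : ℕ) (μ : Fin n → ℝ), IsProbVec μ →
      tvDist ((A ^ t).mulVec μ) π ≤ R * Real.exp (-ρ * t)

lemma dotR_eq_dotProduct (z w : Fin N → ℝ) : dotR z w = z ⬝ᵥ w := rfl

lemma e_injective : Function.Injective (e N) := fun i j h => by
  simpa [e, Pi.single_apply] using congrFun h i

lemma sInf_ratCast_image_gt (r : ℝ) : sInf (((↑) : ℚ → ℝ) '' {q | r < q}) = r := by
  refine csInf_eq_of_forall_ge_of_forall_gt_exists_lt ?_ ?_ fun w hw => ?_
  · obtain ⟨q, hq⟩ := exists_rat_gt r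
    exact ⟨q, q, hq, rfl⟩
  · rintro _ ⟨q, hq, rfl⟩
    exact hq.le
  · obtain ⟨q, hrq, hqw⟩ := exists_rat_btwn hw
    exact ⟨q, ⟨q, hrq, rfl⟩, hqw⟩

/-- Witness: `G a = inf {q : ℚ | a ∈ S q}`, where `{g < q} =ᵐ π ⁻¹' S q`. -/
lemma exists_ae_eq_comp_of_forall_measurableSet {α : Type*} (μ : Measure Ω)
    {m : MeasurableSpace Ω} (π : Ω → α)
    (hπ : ∀ A, MeasurableSet[m] A → ∃ S : Set α, A =ᵐ[μ] π ⁻¹' S)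
    {g : Ω → ℝ} (hg : Measurable[m] g) :
    ∃ G : α → ℝ, g =ᵐ[μ] G ∘ π := by
  choose S hS using fun q : ℚ => hπ {ω | g ω < q} (measurableSet_lt hg measurable_const)
  refine ⟨fun a => sInf (((↑) : ℚ → ℝ) '' {q | a ∈ S q}), ?_⟩
  have hlevel : ∀ᵐ ω ∂μ, ∀ q : ℚ, (g ω < q) = (π ω ∈ S q) := ae_all_iff.2 hS
  filter_upwards [hlevel] with ω hω
  simp only [Function.comp_apply, ← hω, sInf_ratCast_image_gt]

section Path

variable (X : ℕ → Ω → (Fin N → ℝ)) (hX : BasisValued X)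

def stateIdx (s : ℕ) (ω : Ω) : Fin N := (hX s ω).choose

lemma eq_e_stateIdx (s : ℕ) (ω : Ω) : X s ω = e N (stateIdx X hX s ω) :=
  (hX s ω).choose_spec

lemma stateIdx_eq_iff (s : ℕ) (ω : Ω) (i : Fin N) :
    stateIdx X hX s ω = i ↔ X s ω = e N i := by
  rw [eq_e_stateIdx X hX s ω, e_injective.eq_iff]

lemma comap_le_natSigma {s T : ℕ} (hs : s ≤ T) :
    MeasurableSpace.comap (X s) inferInstance ≤ natSigma X T :=
  le_iSup₂ (f := fun u (_ : u ∈ Set.Iic T) => MeasurableSpace.comap (X u) inferInstance) s hs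

def path (T : ℕ) (ω : Ω) : Fin (T + 1) → Fin N := fun s => stateIdx X hX s ω

lemma natSigma_eq_comap_path (T : ℕ) :
    natSigma X T = MeasurableSpace.comap (path X hX T) inferInstance := by
  refine le_antisymm (iSup₂_le fun s hs => ?_) (Measurable.comap_le ?_)
  · rintro A ⟨C, -, rfl⟩
    refine ⟨(fun p => e N (p ⟨s, Nat.lt_succ_of_le hs⟩)) ⁻¹' C, (Set.toFinite _).measurableSet, ?_⟩
    ext ω
    simp [path, ← eq_e_stateIdx]
  · let _ := natSigma X T
    refine measurable_pi_lambda (path X hX T) fun s => measurable_to_countable' fun i => ?_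
    have hpre : (fun ω => path X hX T ω s) ⁻¹' {i} = X s ⁻¹' {e N i} := by
      ext ω
      exact stateIdx_eq_iff X hX s ω i
    rw [hpre]
    exact comap_le_natSigma X (Nat.lt_succ_iff.mp s.isLt) _
      ⟨{e N i}, measurableSet_singleton _, rfl⟩

def lastStepCoeff (t : ℕ) (G : (Fin (t + 2) → Fin N) → ℝ) (ω : Ω) (i : Fin N) : ℝ :=
  G (Fin.snoc (path X hX t ω) i)

lemma comp_path_succ_eq_dotR_lastStepCoeff (t : ℕ) (G : (Fin (t + 2) → Fin N) → ℝ) (ω : Ω) :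
    G (path X hX (t + 1) ω) = dotR (lastStepCoeff X hX t G ω) (X (t + 1) ω) := by
  have hsnoc : path X hX (t + 1) ω = Fin.snoc (path X hX t ω) (stateIdx X hX (t + 1) ω) :=
    (Fin.snoc_init_self _).symm
  rw [hsnoc, eq_e_stateIdx X hX (t + 1) ω, dotR_eq_dotProduct, e, dotProduct_single, mul_one]
  rfl

lemma exists_abs_lastStepCoeff_le (t : ℕ) (G : (Fin (t + 2) → Fin N) → ℝ) :
    ∃ C, ∀ ω i, |lastStepCoeff X hX t G ω i| ≤ C := by
  obtain ⟨C, hC⟩ := (Set.finite_range fun p => |G p|).bddAbove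
  exact ⟨C, fun ω i => hC ⟨_, rfl⟩⟩

variable {X} {P : Measure Ω} {F : Filtration ℕ mΩ}

lemma natSigma_le (hF : IsCompletedNaturalFiltration P X F) (T : ℕ) : natSigma X T ≤ F T :=
  fun A hA => (hF T A).2 ⟨A, hA, by simp⟩

lemma measurable_path (hF : IsCompletedNaturalFiltration P X F) (T : ℕ) :
    Measurable[F T] (path X hX T) :=
  (comap_measurable _).mono ((natSigma_eq_comap_path X hX T) ▸ natSigma_le hF T) le_rfl

lemma measurable_lastStepCoeff (hF : IsCompletedNaturalFiltration P X F) (t : ℕ)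
    (G : (Fin (t + 2) → Fin N) → ℝ) : Measurable[F t] (lastStepCoeff X hX t G) :=
  (measurable_of_countable fun p i => G (Fin.snoc p i)).comp (measurable_path hX hF t)

lemma exists_ae_eq_comp_path (hF : IsCompletedNaturalFiltration P X F) (T : ℕ) {g : Ω → ℝ}
    (hg : Measurable[F T] g) : ∃ G : (Fin (T + 1) → Fin N) → ℝ, g =ᵐ[P] G ∘ path X hX T := by
  refine exists_ae_eq_comp_of_forall_measurableSet (m := F T) P _ (fun A hA => ?_) hg
  obtain ⟨B, hB, hAB⟩ := (hF T A).1 hA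
  rw [natSigma_eq_comap_path X hX T] at hB
  obtain ⟨S, -, rfl⟩ := hB
  exact ⟨S, measure_symmDiff_eq_zero_iff.1 hAB⟩

end Path


lemma condExp_dotR_of_measurable_left {μ : Measure Ω} {m : MeasurableSpace Ω}
    {Z Y : Ω → Fin N → ℝ} (hZ : Measurable[m] Z)
    (hZY : ∀ i, Integrable (fun ω => Z ω i * Y ω i) μ)
    (hY : ∀ i, Integrable (fun ω => Y ω i) μ) :
    μ[fun ω => dotR (Z ω) (Y ω)|m] =ᵐ[μ]
      fun ω => dotR (Z ω) (fun i => μ[fun ω' => Y ω' i|m] ω) := by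
  have hsum : (fun ω => dotR (Z ω) (Y ω)) = ∑ i, fun ω => Z ω i * Y ω i := by
    ext ω
    simp [dotR]
  have hpull : ∀ᵐ ω ∂μ, ∀ i, μ[fun ω' => Z ω' i * Y ω' i|m] ω = Z ω i * μ[fun ω' => Y ω' i|m] ω :=
    ae_all_iff.2 fun i => condExp_mul_of_stronglyMeasurable_left
      ((measurable_pi_apply i).comp hZ).stronglyMeasurable (hZY i) (hY i)
  rw [hsum]
  filter_upwards [condExp_finsetSum (s := Finset.univ) (fun i _ => hZY i) m, hpull] with ω hω hωi
  rw [hω, Finset.sum_apply]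
  exact Finset.sum_congr rfl fun i _ => hωi i

variable {P : Measure Ω} {F : Filtration ℕ mΩ} {X : ℕ → Ω → (Fin N → ℝ)} {t : ℕ}

lemma integrable_apply_of_basisValued [IsFiniteMeasure P] (hX : BasisValued X)
    (hF : IsCompletedNaturalFiltration P X F) (s : ℕ) (i : Fin N) :
    Integrable (fun ω => X s ω i) P := by
  have hmeas : Measurable[F s] (X s) :=
    Measurable.of_comap_le ((comap_le_natSigma X le_rfl).trans (natSigma_le hF s))
  refine .of_bound (((measurable_pi_apply i).comp hmeas).mono (F.le s) le_rfl).aestronglyMeasurable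
    1 (ae_of_all _ fun ω => ?_)
  rw [eq_e_stateIdx X hX s ω, e, Pi.single_apply]
  split_ifs <;> simp

lemma ae_eq_dotR_Mdiff_of_condExp_eq_zero {Z : Ω → Fin N → ℝ} {C : ℝ} {W : Ω → ℝ}
    (hZ : Measurable[F t] Z) (hZC : ∀ ω i, |Z ω i| ≤ C)
    (hX : ∀ i, Integrable (fun ω => X (t + 1) ω i) P)
    (hWZ : W =ᵐ[P] fun ω => dotR (Z ω) (X (t + 1) ω)) (hW : P[W|F t] =ᵐ[P] 0) :
    ∀ᵐ ω ∂P, W ω = dotR (Z ω) (Mdiff P F X t ω) := by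
  have hZX : ∀ i, Integrable (fun ω => Z ω i * X (t + 1) ω i) P := fun i =>
    (hX i).bdd_mul (((measurable_pi_apply i).comp hZ).mono (F.le t) le_rfl).aestronglyMeasurable
      (ae_of_all _ fun ω => hZC ω i)
  have hdrift : (fun ω => dotR (Z ω) (fun i => P[fun ω' => X (t + 1) ω' i|F t] ω)) =ᵐ[P] 0 :=
    (condExp_dotR_of_measurable_left hZ hZX hX).symm.trans ((condExp_congr_ae hWZ).symm.trans hW)
  filter_upwards [hWZ, hdrift] with ω hωW hω
  rw [Pi.zero_apply] at hω
  rw [hωW, ← sub_zero (dotR _ _), ← hω]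
  exact (dotProduct_sub _ _ _).symm

lemma equivMt_of_ae_eq_dotR {Z Z' : Ω → Fin N → ℝ} {W : Ω → ℝ}
    (hZ : ∀ᵐ ω ∂P, W ω = dotR (Z ω) (Mdiff P F X t ω))
    (hZ' : ∀ᵐ ω ∂P, W ω = dotR (Z' ω) (Mdiff P F X t ω)) : equivMt P F X t Z Z' := by
  have hsq : (fun ω => dotR (Z ω - Z' ω) (Mdiff P F X t ω) ^ 2) =ᵐ[P] 0 := by
    filter_upwards [hZ, hZ'] with ω hω hω'
    rw [dotR_eq_dotProduct, sub_dotProduct, ← dotR_eq_dotProduct, ← dotR_eq_dotProduct, ← hω, ← hω']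
    simp
  exact (condExp_congr_ae hsq).trans (by rw [condExp_zero])

/-- **One-step martingale representation.** If `W` is `F (t+1)`-measurable with
`E[W | F t] = 0` a.s., then there is an `F t`-measurable `ℝ^N`-valued `Z` with
`W = Zᵀ M (t+1)` a.s., unique up to `∼_{M_{t+1}}`. -/
theorem one_step_representation
    {Ω : Type*} {mΩ : MeasurableSpace Ω} {N : ℕ}
    (P : Measure Ω) [IsProbabilityMeasure P] (F : Filtration ℕ mΩ)
    (X : ℕ → Ω → (Fin N → ℝ)) (hX : BasisValued X)
    (hF : IsCompletedNaturalFiltration P X F)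
    (t : ℕ) (W : Ω → ℝ) (hW : StronglyMeasurable[F (t + 1)] W)
    (hWcond : P[W|F t] =ᵐ[P] 0) :
    ∃ Z : Ω → Fin N → ℝ, StronglyMeasurable[F t] Z ∧
      (∀ᵐ ω ∂P, W ω = dotR (Z ω) (Mdiff P F X t ω)) ∧
      ∀ Z' : Ω → Fin N → ℝ, StronglyMeasurable[F t] Z' →
        (∀ᵐ ω ∂P, W ω = dotR (Z' ω) (Mdiff P F X t ω)) →
        equivMt P F X t Z Z' := by
  obtain ⟨G, hG⟩ := exists_ae_eq_comp_path hX hF (t + 1) hW.measurable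
  obtain ⟨C, hC⟩ := exists_abs_lastStepCoeff_le X hX t G
  have hZ := measurable_lastStepCoeff hX hF t G
  have hWZ : W =ᵐ[P] fun ω => dotR (lastStepCoeff X hX t G ω) (X (t + 1) ω) :=
    hG.trans (ae_of_all _ (comp_path_succ_eq_dotR_lastStepCoeff X hX t G))
  have hrep := ae_eq_dotR_Mdiff_of_condExp_eq_zero hZ hC
    (integrable_apply_of_basisValued hX hF (t + 1)) hWZ hWcond
  exact ⟨_, hZ.stronglyMeasurable, hrep, fun _ _ hZ' => equivMt_of_ae_eq_dotR hrep hZ'⟩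

end DiscreteEBSDE
end
end

section
/- (Markovian structure of finite-horizon solutions) Assume X is a Markov chain with transition matrices A_t, let f be a Markovian driver, f(ω,t,y,z) = f̃(X_t(ω),t,y,z), satisfying: (i) for any adapted Y and any Z ∼_M Z', f(ω,t,Y_t,Z_t) = f(ω,t,Y_t,Z'_t) a.s. for all t; (ii) for any z, t and almost all ω, y ↦ y − f(ω,t,y,z) is a bijection ℝ → ℝ. Suppose ξ = φ(X_T) for a deterministic function φ : S → ℝ, and let (Y,Z) be the unique solution of the finite horizon BSDE Y_t − Σ_{t≤u<T} f(ω,u,Y_u,Z_u) + Σ_{t≤u<T} Z_uᵀM_{u+1} = ξ. Then there exists a deterministic function v : {0,1,…,T} × S → ℝ such that for each t, Y_t = v(t,X_t) a.s. and Z_t may be chosen (within its ∼_{M_{t+1}}-class) with e_kᵀZ_t = v(t+1,e_k) for all e_k ∈ S. Moreover, writing v_{t+1} ∈ ℝ^N for the vector with entries e_kᵀv_{t+1} = v(t+1,e_k), the function v satisfies v(t,e_k) − f̃(e_k,t,v(t,e_k),v_{t+1}) − v_{t+1}ᵀA_te_k = 0 for all t ∈ {0,…,T−1} and all e_k ∈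 S with P(X_t = e_k) > 0. -/
open MeasureTheory Finset Filter

noncomputable section

namespace DiscreteEBSDE

variable {Ω : Type*} {mΩ : MeasurableSpace Ω} {N : ℕ}

lemma dotR_e (z : Fin N → ℝ) (i : Fin N) : dotR z (e N i) = z i := by
  simp [dotR_eq_dotProduct, e]

lemma mulVec_e_apply (A : Matrix (Fin N) (Fin N) ℝ) (j k : Fin N) :
    A.mulVec (e N k) j = A j k := by
  simp [e]

lemma IsTransMat.sum_mulVec_e {A : Matrix (Fin N) (Fin N) ℝ} (hA : IsTransMat A) (k : Fin N) :
    ∑ j, A.mulVec (e N k) j = 1 := by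
  simpa [mulVec_e_apply] using hA.2 k

lemma IsTransMat.mulVec_apply_mem_Icc {A : Matrix (Fin N) (Fin N) ℝ} (hA : IsTransMat A)
    {x : Fin N → ℝ} (hx : ∃ k, x = e N k) (j : Fin N) : A.mulVec x j ∈ Set.Icc 0 1 := by
  obtain ⟨k, rfl⟩ := hx
  rw [mulVec_e_apply]
  refine ⟨hA.1 j k, ?_⟩
  calc A j k ≤ ∑ i, A i k := Finset.single_le_sum (fun i _ => hA.1 i k) (Finset.mem_univ j)
    _ = 1 := hA.2 k

lemma e_apply_mem_Icc (i j : Fin N) : e N i j ∈ Set.Icc 0 1 := by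
  by_cases h : j = i <;> simp [e, h]

lemma IsCompletedNaturalFiltration.adapted {P : Measure Ω} {X : ℕ → Ω → Fin N → ℝ}
    {F : Filtration ℕ mΩ} (hF : IsCompletedNaturalFiltration P X F) : Adapted F X := by
  intro t S hS
  rw [hF t]
  refine ⟨X t ⁻¹' S, ?_, by simp⟩
  exact le_iSup₂ (f := fun (u : ℕ) (_ : u ∈ Set.Iic t) =>
    MeasurableSpace.comap (X u) inferInstance) t (Set.mem_Iic.2 le_rfl) _ ⟨S, hS, rfl⟩

lemma equivMt_of_ae_dotR_mdiff_eq_zero {P : Measure Ω} {F : Filtration ℕ mΩ}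
    {X : ℕ → Ω → Fin N → ℝ} {t : ℕ} {Z Z' : Ω → Fin N → ℝ}
    (h : ∀ᵐ ω ∂P, dotR (Z ω - Z' ω) (Mdiff P F X t ω) = 0) : equivMt P F X t Z Z' := by
  have hsq : (fun ω => dotR (Z ω - Z' ω) (Mdiff P F X t ω) ^ 2) =ᵐ[P] 0 :=
    h.mono fun ω hω => by simp [hω]
  refine (condExp_congr_ae hsq).trans ?_
  rw [condExp_zero]

lemma equivMt_refl (P : Measure Ω) (F : Filtration ℕ mΩ) (X : ℕ → Ω → Fin N → ℝ) (t : ℕ)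
    (Z : Ω → Fin N → ℝ) : equivMt P F X t Z Z :=
  equivMt_of_ae_dotR_mdiff_eq_zero (ae_of_all _ fun ω => by simp [dotR])

section MarkovChain

variable {P : Measure Ω} {F : Filtration ℕ mΩ} {X : ℕ → Ω → Fin N → ℝ}
  {A : ℕ → Matrix (Fin N) (Fin N) ℝ} {t : ℕ}

lemma IsMarkovChain.ae_mdiff_eq (hA : IsMarkovChain P F X A) (t : ℕ) :
    ∀ᵐ ω ∂P, Mdiff P F X t ω = X (t + 1) ω - (A t).mulVec (X t ω) := by
  filter_upwards [ae_all_iff.2 (hA.2 t)] with ω hω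
  ext j
  simp [Mdiff, hω j]

lemma measurable_mulVec_apply (hXF : Adapted F X) (t : ℕ) (j : Fin N) :
    Measurable[F t] fun ω => (A t).mulVec (X t ω) j := by
  have hXt := hXF t
  simp only [Matrix.mulVec, dotProduct]
  fun_prop

lemma IsMarkovChain.setIntegral_mulVec_apply [IsFiniteMeasure P] (hX : BasisValued X)
    (hF : IsCompletedNaturalFiltration P X F) (hA : IsMarkovChain P F X A) {B : Set Ω}
    (hB : MeasurableSet[F t] B) (j : Fin N) :
    ∫ ω in B, (A t).mulVec (X t ω) j ∂P = ∫ ω in B, X (t + 1) ω j ∂P := by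
  have hint : Integrable (fun ω => X (t + 1) ω j) P := by
    refine Integrable.of_mem_Icc 0 1 ?_ (ae_of_all _ fun ω => ?_)
    · exact (((measurable_pi_apply j).comp (hF.adapted (t + 1))).mono (F.le _) le_rfl).aemeasurable
    · obtain ⟨i, hi⟩ := hX (t + 1) ω
      simpa [hi] using e_apply_mem_Icc i j
  rw [← setIntegral_condExp (F.le t) hint hB]
  exact setIntegral_congr_ae (F.le t _ hB) ((hA.2 t j).mono fun ω hω _ => hω.symm)

lemma IsMarkovChain.ae_eq_zero_of_mulVec_pos [IsFiniteMeasure P] (hX : BasisValued X)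
    (hF : IsCompletedNaturalFiltration P X F) (hA : IsMarkovChain P F X A) {g : Ω → ℝ}
    (hg : Measurable[F t] g) {j : Fin N} (h : ∀ᵐ ω ∂P, X (t + 1) ω = e N j → g ω = 0) :
    ∀ᵐ ω ∂P, 0 < (A t).mulVec (X t ω) j → g ω = 0 := by
  set B := {ω | g ω = 0}ᶜ
  have hB : MeasurableSet[F t] B := (hg (measurableSet_singleton 0)).compl
  have hjump : ∫ ω in B, X (t + 1) ω j ∂P = 0 := by
    refine setIntegral_eq_zero_of_ae_eq_zero ?_
    filter_upwards [h] with ω hω hωB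
    obtain ⟨i, hi⟩ := hX (t + 1) ω
    by_cases hij : i = j
    · subst hij
      exact absurd (hω hi) hωB
    · simp [hi, e, Ne.symm hij]
  have hint : IntegrableOn (fun ω => (A t).mulVec (X t ω) j) B P := by
    refine (Integrable.of_mem_Icc 0 1 ?_ (ae_of_all _ fun ω => ?_)).integrableOn
    · exact ((measurable_mulVec_apply hF.adapted t j).mono (F.le t) le_rfl).aemeasurable
    · exact (hA.1 t).mulVec_apply_mem_Icc (hX t ω) j
  have hnonneg : 0 ≤ᵐ[P.restrict B] fun ω => (A t).mulVec (X t ω) j :=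
    ae_of_all _ fun ω => ((hA.1 t).mulVec_apply_mem_Icc (hX t ω) j).1
  have hzero := (setIntegral_eq_zero_iff_of_nonneg_ae hnonneg hint).1
    ((hA.setIntegral_mulVec_apply hX hF hB j).trans hjump)
  filter_upwards [(ae_restrict_iff' (F.le t _ hB)).1 hzero] with ω hω hpos
  by_contra hne
  exact hpos.ne' (hω hne)

lemma IsMarkovChain.ae_add_dotR_mulVec_eq_zero [IsFiniteMeasure P] (hX : BasisValued X)
    (hF : IsCompletedNaturalFiltration P X F) (hA : IsMarkovChain P F X A) {H : Ω → ℝ}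
    {D : Ω → Fin N → ℝ} (hH : Measurable[F t] H) (hD : Measurable[F t] D)
    (h : ∀ᵐ ω ∂P, H ω + dotR (D ω) (X (t + 1) ω) = 0) :
    ∀ᵐ ω ∂P, H ω + dotR (D ω) ((A t).mulVec (X t ω)) = 0 := by
  have hreach : ∀ᵐ ω ∂P, ∀ j, 0 < (A t).mulVec (X t ω) j → H ω + D ω j = 0 := by
    refine ae_all_iff.2 fun j => hA.ae_eq_zero_of_mulVec_pos hX hF
      (hH.add ((measurable_pi_apply j).comp hD)) ?_
    filter_upwards [h] with ω hω hj
    rwa [hj, dotR_e] at hω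
  filter_upwards [hreach] with ω hω
  obtain ⟨k, hk⟩ := hX t ω
  calc H ω + dotR (D ω) ((A t).mulVec (X t ω))
      = ∑ j, (H ω + D ω j) * (A t).mulVec (e N k) j := by
        simp only [hk, dotR, add_mul, Finset.sum_add_distrib, ← Finset.mul_sum,
          (hA.1 t).sum_mulVec_e k, mul_one]
    _ = 0 := by
        refine Finset.sum_eq_zero fun j _ => ?_
        rcases ((hA.1 t).mulVec_apply_mem_Icc ⟨k, rfl⟩ j).1.lt_or_eq with hpos | hzero
        · rw [hω j (hk ▸ hpos), zero_mul]
        · rw [← hzero, mul_zero]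

end MarkovChain

section FiniteBSDE

variable {P : Measure Ω} {F : Filtration ℕ mΩ} {X : ℕ → Ω → Fin N → ℝ}
  {A : ℕ → Matrix (Fin N) (Fin N) ℝ} {f : Ω → ℕ → ℝ → (Fin N → ℝ) → ℝ} {T : ℕ} {ξ : Ω → ℝ}
  {Y : ℕ → Ω → ℝ} {Z : ℕ → Ω → Fin N → ℝ} {t : ℕ}

lemma SolvesFiniteBSDE.ae_one_step (hYZ : SolvesFiniteBSDE P F X f T ξ Y Z) (ht : t < T) :
    ∀ᵐ ω ∂P, Y t ω - f ω t (Y t ω) (Z t ω) + dotR (Z t ω) (Mdiff P F X t ω) = Y (t + 1) ω := by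
  filter_upwards [hYZ.2.2 t ht.le, hYZ.2.2 (t + 1) ht] with ω h h'
  rw [Finset.sum_eq_sum_Ico_succ_bot ht, Finset.sum_eq_sum_Ico_succ_bot ht] at h
  linarith

lemma SolvesFiniteBSDE.step_of_ae_eq_dotR [IsFiniteMeasure P]
    (hYZ : SolvesFiniteBSDE P F X f T ξ Y Z) (hX : BasisValued X)
    (hF : IsCompletedNaturalFiltration P X F) (hA : IsMarkovChain P F X A)
    (hf : DriverAdapted F f) (ht : t < T) {w : Fin N → ℝ}
    (hY : Y (t + 1) =ᵐ[P] fun ω => dotR w (X (t + 1) ω)) :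
    equivMt P F X t (Z t) (fun _ => w) ∧
      ∀ᵐ ω ∂P, Y t ω - f ω t (Y t ω) (Z t ω) = dotR w ((A t).mulVec (X t ω)) := by
  set H : Ω → ℝ := fun ω =>
    Y t ω - f ω t (Y t ω) (Z t ω) - dotR (Z t ω) ((A t).mulVec (X t ω))
  have hH : Measurable[F t] H := by
    have hYt := hYZ.1 t
    have hZt := hYZ.2.1 t
    have hft : Measurable[F t] fun ω => f ω t (Y t ω) (Z t ω) :=
      (hf t).comp (measurable_id.prodMk (hYt.prodMk hZt))
    have hdot : Measurable[F t] fun ω => dotR (Z t ω) ((A t).mulVec (X t ω)) :=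
      Finset.measurable_sum _ fun i _ =>
        ((measurable_pi_apply i).comp hZt).mul (measurable_mulVec_apply hF.adapted t i)
    exact (hYt.sub hft).sub hdot
  have hD : Measurable[F t] fun ω => Z t ω - w := (hYZ.2.1 t).sub_const w
  have hjump : ∀ᵐ ω ∂P, H ω + dotR (Z t ω - w) (X (t + 1) ω) = 0 := by
    filter_upwards [hYZ.ae_one_step ht, hY, hA.ae_mdiff_eq t] with ω hstep hYw hM
    rw [hM, hYw] at hstep
    simp only [H, dotR_eq_dotProduct, sub_dotProduct, dotProduct_sub] at hstep ⊢
    linarith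
  have hmean := hA.ae_add_dotR_mulVec_eq_zero hX hF hH hD hjump
  refine ⟨equivMt_of_ae_dotR_mdiff_eq_zero ?_, ?_⟩
  · filter_upwards [hjump, hmean, hA.ae_mdiff_eq t] with ω hjω hmω hM
    rw [hM, dotR_eq_dotProduct, dotProduct_sub]
    rw [dotR_eq_dotProduct] at hjω hmω
    linarith
  · filter_upwards [hmean] with ω hmω
    simp only [H, dotR_eq_dotProduct, sub_dotProduct] at hmω ⊢
    linarith

lemma ae_driver_eq_of_equivMt
    (hf : ∀ (Y : ℕ → Ω → ℝ) (Z Z' : ℕ → Ω → Fin N → ℝ), Adapted F Y → Adapted F Z →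
      Adapted F Z' → equivM P F X Z Z' →
      ∀ t : ℕ, ∀ᵐ ω ∂P, f ω t (Y t ω) (Z t ω) = f ω t (Y t ω) (Z' t ω))
    (hY : Adapted F Y) (hZ : Adapted F Z) {w : Fin N → ℝ}
    (hZw : equivMt P F X t (Z t) fun _ => w) :
    ∀ᵐ ω ∂P, f ω t (Y t ω) (Z t ω) = f ω t (Y t ω) w := by
  have hZ' : Adapted F (Function.update Z t fun _ => w) := by
    intro s
    rcases eq_or_ne s t with rfl | hst
    · simp
    · simpa [Function.update_of_ne hst] using hZ s
  have hequiv : equivM P F X Z (Function.update Z t fun _ => w) := by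
    intro s
    rcases eq_or_ne s t with rfl | hst
    · simpa using hZw
    · simpa [Function.update_of_ne hst] using equivMt_refl P F X s (Z s)
  simpa using hf Y Z _ hY hZ hZ' hequiv t

end FiniteBSDE

section MarkovValue

variable (ftil : (Fin N → ℝ) → ℕ → ℝ → (Fin N → ℝ) → ℝ) (A : ℕ → Matrix (Fin N) (Fin N) ℝ)
  (φ : (Fin N → ℝ) → ℝ) (T : ℕ)

/-- The paper's `v (t, e k)` is `markovValue ftil A φ T t k`. Where `y ↦ y - f̃ (e k, t, y, v (t+1))`
is not surjective, `invFun` returns a junk value. -/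
def markovValue (t : ℕ) : Fin N → ℝ :=
  if t < T then fun k =>
    Function.invFun (fun y => y - ftil (e N k) t y (markovValue (t + 1)))
      (dotR (markovValue (t + 1)) ((A t).mulVec (e N k)))
  else fun k => φ (e N k)
termination_by T - t

variable {ftil A φ T}

lemma markovValue_of_le {t : ℕ} (h : T ≤ t) : markovValue ftil A φ T t = fun k => φ (e N k) := by
  rw [markovValue, if_neg (not_lt.2 h)]

lemma sub_eq_dotR_iff_eq_markovValue {t : ℕ} (ht : t < T) {k : Fin N}
    (hbij : Function.Bijective fun y => y - ftil (e N k) t y (markovValue ftil A φ T (t + 1)))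
    {y : ℝ} :
    y - ftil (e N k) t y (markovValue ftil A φ T (t + 1)) =
        dotR (markovValue ftil A φ T (t + 1)) ((A t).mulVec (e N k)) ↔
      y = markovValue ftil A φ T t k := by
  conv_rhs => rw [markovValue, if_pos ht]
  exact hbij.injective.eq_iff' (Function.invFun_eq (hbij.surjective _))

end MarkovValue

theorem SolvesFiniteBSDE.ae_eq_dotR_markovValue {P : Measure Ω} [IsFiniteMeasure P]
    {F : Filtration ℕ mΩ} {X : ℕ → Ω → Fin N → ℝ} (hX : BasisValued X)
    (hF : IsCompletedNaturalFiltration P X F) {A : ℕ → Matrix (Fin N) (Fin N) ℝ}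
    (hA : IsMarkovChain P F X A) {T : ℕ} {ftil : (Fin N → ℝ) → ℕ → ℝ → (Fin N → ℝ) → ℝ}
    (hfAd : DriverAdapted F fun ω t y z => ftil (X t ω) t y z)
    (hf1 : ∀ (Y : ℕ → Ω → ℝ) (Z Z' : ℕ → Ω → Fin N → ℝ), Adapted F Y → Adapted F Z →
      Adapted F Z' → equivM P F X Z Z' →
      ∀ t : ℕ, ∀ᵐ ω ∂P, ftil (X t ω) t (Y t ω) (Z t ω) = ftil (X t ω) t (Y t ω) (Z' t ω))
    (hf2 : ∀ (z : Fin N → ℝ) (t : ℕ), t < T →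
      ∀ᵐ ω ∂P, Function.Bijective fun y : ℝ => y - ftil (X t ω) t y z)
    {φ : (Fin N → ℝ) → ℝ} {Y : ℕ → Ω → ℝ} {Z : ℕ → Ω → Fin N → ℝ}
    (hYZ : SolvesFiniteBSDE P F X (fun ω t y z => ftil (X t ω) t y z) T
      (fun ω => φ (X T ω)) Y Z) {t : ℕ} (ht : t ≤ T) :
    Y t =ᵐ[P] fun ω => dotR (markovValue ftil A φ T t) (X t ω) := by
  induction ht using Nat.decreasingInduction with
  | self =>
    filter_upwards [hYZ.2.2 T le_rfl] with ω hω
    obtain ⟨k, hk⟩ := hX T ω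
    simpa [markovValue_of_le le_rfl, hk, dotR_e] using hω
  | of_succ t ht ih =>
    obtain ⟨hZw, hYt⟩ := hYZ.step_of_ae_eq_dotR hX hF hA hfAd ht ih
    filter_upwards [hYt, ae_driver_eq_of_equivMt hf1 hYZ.1 hYZ.2.1 hZw, hf2 _ t ht]
      with ω hY hdriver hbij
    obtain ⟨k, hk⟩ := hX t ω
    rw [hdriver] at hY
    rw [hk] at hY hbij
    rw [hk, dotR_e]
    exact (sub_eq_dotR_iff_eq_markovValue ht hbij).1 hY

theorem finite_horizon_markovian_solution_general
    {Ω : Type*} {mΩ : MeasurableSpace Ω} {N : ℕ}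
    (P : Measure Ω) [IsProbabilityMeasure P] (F : Filtration ℕ mΩ)
    (X : ℕ → Ω → (Fin N → ℝ)) (hX : BasisValued X)
    (hF : IsCompletedNaturalFiltration P X F)
    (A : ℕ → Matrix (Fin N) (Fin N) ℝ) (hA : IsMarkovChain P F X A)
    (T : ℕ)
    (ftil : (Fin N → ℝ) → ℕ → ℝ → (Fin N → ℝ) → ℝ)
    (hfAd : DriverAdapted F fun ω t y z => ftil (X t ω) t y z)
    (hf1 : ∀ (Y : ℕ → Ω → ℝ) (Z Z' : ℕ → Ω → Fin N → ℝ), Adapted F Y → Adapted F Z →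
      Adapted F Z' → equivM P F X Z Z' →
      ∀ t : ℕ, ∀ᵐ ω ∂P, ftil (X t ω) t (Y t ω) (Z t ω) = ftil (X t ω) t (Y t ω) (Z' t ω))
    (hf2 : ∀ (z : Fin N → ℝ) (t : ℕ), t < T →
      ∀ᵐ ω ∂P, Function.Bijective fun y : ℝ => y - ftil (X t ω) t y z)
    (φ : (Fin N → ℝ) → ℝ)
    (Y : ℕ → Ω → ℝ) (Z : ℕ → Ω → Fin N → ℝ)
    (hYZ : SolvesFiniteBSDE P F X (fun ω t y z => ftil (X t ω) t y z) T
      (fun ω => φ (X T ω)) Y Z) :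
    ∃ v : ℕ → Fin N → ℝ,
      (∀ t ≤ T, Y t =ᵐ[P] fun ω => dotR (v t) (X t ω)) ∧
      (∀ t < T, equivMt P F X t (Z t) fun _ => v (t + 1)) ∧
      ∀ t < T, ∀ k : Fin N, 0 < P {ω | X t ω = e N k} →
        v t k - ftil (e N k) t (v t k) (v (t + 1)) -
          dotR (v (t + 1)) ((A t).mulVec (e N k)) = 0 := by
  have hY t (ht : t ≤ T) := hYZ.ae_eq_dotR_markovValue hX hF hA hfAd hf1 hf2 ht
  refine ⟨markovValue ftil A φ T, hY,
    fun t ht => (hYZ.step_of_ae_eq_dotR hX hF hA hfAd ht (hY (t + 1) ht)).1,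
    fun t ht k hk => ?_⟩
  obtain ⟨ω, hωk, hbij⟩ := Measure.exists_mem_of_measure_ne_zero_of_ae hk.ne'
    (ae_restrict_of_ae (hf2 (markovValue ftil A φ T (t + 1)) t ht))
  rw [show X t ω = e N k from hωk] at hbij
  exact sub_eq_zero.2 ((sub_eq_dotR_iff_eq_markovValue ht hbij).2 rfl)

/-- **Markovian structure of finite-horizon BSDE solutions.** -/
theorem finite_horizon_markovian_solution
    {Ω : Type*} {mΩ : MeasurableSpace Ω} {N : ℕ}
    (P : Measure Ω) [IsProbabilityMeasure P] (F : Filtration ℕ mΩ)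
    (X : ℕ → Ω → (Fin N → ℝ)) (hX : BasisValued X)
    (hF : IsCompletedNaturalFiltration P X F)
    (A : ℕ → Matrix (Fin N) (Fin N) ℝ) (hA : IsMarkovChain P F X A)
    (T : ℕ) (hT : 0 < T)
    (ftil : (Fin N → ℝ) → ℕ → ℝ → (Fin N → ℝ) → ℝ)
    (hfAd : DriverAdapted F fun ω t y z => ftil (X t ω) t y z)
    (hf1 : ∀ (Y : ℕ → Ω → ℝ) (Z Z' : ℕ → Ω → Fin N → ℝ), Adapted F Y → Adapted F Z →
      Adapted F Z' → equivM P F X Z Z' →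
      ∀ t : ℕ, ∀ᵐ ω ∂P, ftil (X t ω) t (Y t ω) (Z t ω) = ftil (X t ω) t (Y t ω) (Z' t ω))
    (hf2 : ∀ (z : Fin N → ℝ) (t : ℕ), t < T →
      ∀ᵐ ω ∂P, Function.Bijective fun y : ℝ => y - ftil (X t ω) t y z)
    (φ : (Fin N → ℝ) → ℝ)
    (Y : ℕ → Ω → ℝ) (Z : ℕ → Ω → Fin N → ℝ)
    (hYZ : SolvesFiniteBSDE P F X (fun ω t y z => ftil (X t ω) t y z) T
      (fun ω => φ (X T ω)) Y Z) :
    ∃ v : ℕ → Fin N → ℝ,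
      (∀ t ≤ T, Y t =ᵐ[P] fun ω => dotR (v t) (X t ω)) ∧
      (∀ t < T, equivMt P F X t (Z t) fun _ => v (t + 1)) ∧
      ∀ t < T, ∀ k : Fin N, 0 < P {ω | X t ω = e N k} →
        v t k - ftil (e N k) t (v t k) (v (t + 1)) -
          dotR (v (t + 1)) ((A t).mulVec (e N k)) = 0 :=
  finite_horizon_markovian_solution_general P F X hX hF A hA T ftil hfAd hf1 hf2 φ Y Z hYZ

end DiscreteEBSDE
end
end
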